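/- There exist constants c > 0 and ε₀ > 0 such that for every ε ∈ (0, ε₀) with k = (4/ε)² an integer, and for every sufficiently large m, there exists a code C ⊆ [k]^m with |C| ≥ k^{c·ε·m/log₂(1/ε)} such that every two distinct codewords of C have longest common subsequence of length less than εm; that is, C has rate Ω(ε/log(1/ε)) and can be corrected from a 1−ε = 1−4/√k fraction of worst-case deletions. (Proposition 2.2 of the paper, obtained from a random code via the LCS concentration bound of Kiwi–Loebl–Matoušek.) -/

import Mathlib

/-!
A fixed word `u ∈ [k]^m` shares a common subsequence of length `ℓ = ⌈εm⌉` with at most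
`C(m,ℓ)² k^(m-ℓ)` words: choose the positions in `u` and in `v`, then the rest of `v`.
Choosing codewords greedily therefore yields any number `M` of them as long as
`M C(m,ℓ)² k^(m-ℓ) < k^m`. Since `C(m,ℓ) ≤ (e/ε)^ℓ` and `2e² < 16`, this holds for `M = 2^ℓ`,
and `2^ℓ ≥ 2^(εm) ≥ k^(εm/(4 log₂(1/ε)))` because `k = 16/ε² ≤ ε⁻⁴` for `ε ≤ 1/4`.
-/

/-- `s` (of length `ℓ`) is a subsequence of `t` (of length `m`): there are indices
`i₁ < ⋯ < i_ℓ` with `t (i_j) = s j` for all `j`. -/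
def IsSubseq {α : Type*} {ℓ m : ℕ} (s : Fin ℓ → α) (t : Fin m → α) : Prop :=
  ∃ f : Fin ℓ → Fin m, StrictMono f ∧ ∀ j, t (f j) = s j

open Finset Function

theorem card_filter_strictMono_le (ℓ m : ℕ) :
    #{f : Fin ℓ → Fin m | StrictMono f} ≤ m.choose ℓ := by
  calc #{f : Fin ℓ → Fin m | StrictMono f}
      ≤ #((univ : Finset (Fin m)).powersetCard ℓ) := by
        refine card_le_card_of_injOn (fun f => univ.image f) (fun f hf => ?_)
          fun f hf g hg hfg => ?_
        · simp only [mem_coe, mem_filter, mem_univ, true_and] at hf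
          simp [mem_powersetCard, card_image_of_injective _ hf.injective]
        · simp only [mem_coe, mem_filter, mem_univ, true_and] at hf hg
          rw [← hf.range_inj hg]
          simpa using congrArg ((↑) : Finset (Fin m) → Set (Fin m)) hfg
    _ = m.choose ℓ := by simp

theorem card_filter_comp_eq_le {α ι κ : Type*} [Fintype α] [DecidableEq α] [Fintype ι]
    [DecidableEq ι] [Fintype κ] {g : κ → ι} (hg : Injective g) (w : κ → α) :
    #{v : ι → α | v ∘ g = w} ≤ Fintype.card α ^ (Fintype.card ι - Fintype.card κ) := by
  classical
  calc #{v : ι → α | v ∘ g = w}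
      ≤ #(univ : Finset ({x // x ∉ Set.range g} → α)) := by
        refine card_le_card_of_injOn (fun v x => v x) (fun _ _ => mem_coe.2 (mem_univ _))
          fun v hv v' hv' hvv' => funext fun x => ?_
        simp only [mem_coe, mem_filter, mem_univ, true_and] at hv hv'
        by_cases hx : x ∈ Set.range g
        · obtain ⟨j, rfl⟩ := hx
          exact (congrFun hv j).trans (congrFun hv' j).symm
        · exact congrFun hvv' ⟨x, hx⟩
    _ = Fintype.card α ^ (Fintype.card ι - Fintype.card κ) := by
        rw [card_univ, Fintype.card_fun, Fintype.card_subtype_compl,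
          Set.card_range_of_injective hg]

def HasCommonSubseq {α : Type*} {m : ℕ} (ℓ : ℕ) (u v : Fin m → α) : Prop :=
  ∃ s : Fin ℓ → α, IsSubseq s u ∧ IsSubseq s v

section CommonSubseq

variable {α : Type*} {ℓ m : ℕ}

theorem HasCommonSubseq.symm {u v : Fin m → α} (h : HasCommonSubseq ℓ u v) :
    HasCommonSubseq ℓ v u :=
  let ⟨s, hu, hv⟩ := h
  ⟨s, hv, hu⟩

theorem hasCommonSubseq_self (h : ℓ ≤ m) (u : Fin m → α) : HasCommonSubseq ℓ u u :=
  ⟨u ∘ Fin.castLE h, ⟨Fin.castLE h, Fin.strictMono_castLE h, fun _ => rfl⟩,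
    ⟨Fin.castLE h, Fin.strictMono_castLE h, fun _ => rfl⟩⟩

theorem hasCommonSubseq_iff {u v : Fin m → α} :
    HasCommonSubseq ℓ u v ↔
      ∃ f g : Fin ℓ → Fin m, StrictMono f ∧ StrictMono g ∧ v ∘ g = u ∘ f := by
  constructor
  · rintro ⟨s, ⟨f, hf, hfs⟩, ⟨g, hg, hgs⟩⟩
    exact ⟨f, g, hf, hg, funext fun j => (hgs j).trans (hfs j).symm⟩
  · rintro ⟨f, g, hf, hg, hfg⟩
    exact ⟨u ∘ f, ⟨f, hf, fun _ => rfl⟩, ⟨g, hg, congrFun hfg⟩⟩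

open Classical in
theorem card_filter_hasCommonSubseq_le [Fintype α] (u : Fin m → α) :
    #{v | HasCommonSubseq ℓ u v} ≤ m.choose ℓ ^ 2 * Fintype.card α ^ (m - ℓ) := by
  set S := ({f : Fin ℓ → Fin m | StrictMono f} : Finset _)
  calc #{v | HasCommonSubseq ℓ u v}
      ≤ #((S ×ˢ S).biUnion fun fg => {v : Fin m → α | v ∘ fg.2 = u ∘ fg.1}) := by
        refine card_le_card fun v hv => ?_
        obtain ⟨f, g, hf, hg, hfg⟩ := hasCommonSubseq_iff.1 (mem_filter.1 hv).2
        exact mem_biUnion.2 ⟨(f, g), by simp [S, hf, hg], by simp [hfg]⟩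
    _ ≤ ∑ fg ∈ S ×ˢ S, #{v : Fin m → α | v ∘ fg.2 = u ∘ fg.1} := card_biUnion_le
    _ ≤ ∑ _fg ∈ S ×ˢ S, Fintype.card α ^ (m - ℓ) := by
        refine sum_le_sum fun fg hfg => ?_
        have hg : StrictMono fg.2 := (mem_filter.1 (mem_product.1 hfg).2).2
        simpa using card_filter_comp_eq_le hg.injective (u ∘ fg.1)
    _ ≤ m.choose ℓ ^ 2 * Fintype.card α ^ (m - ℓ) := by
        rw [sum_const, card_product, smul_eq_mul, sq]
        gcongr <;> exact card_filter_strictMono_le ℓ m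

end CommonSubseq

theorem exists_card_eq_pairwise_not_rel {β : Type*} [Fintype β] [DecidableEq β]
    (R : β → β → Prop) [DecidableRel R] (hrefl : ∀ u, R u u) (hsymm : ∀ u v, R u v → R v u)
    {D : ℕ} (hD : ∀ u, #{v | R u v} ≤ D) :
    ∀ {M : ℕ}, M * D < Fintype.card β →
      ∃ C : Finset β, #C = M ∧ (C : Set β).Pairwise fun u v => ¬ R u v
  | 0, _ => ⟨∅, rfl, by simp⟩
  | M + 1, hM => by
    obtain ⟨C, hCM, hC⟩ := exists_card_eq_pairwise_not_rel R hrefl hsymm hD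
      (M := M) (lt_of_le_of_lt (Nat.mul_le_mul_right D M.le_succ) hM)
    have hnbhd : #(C.biUnion fun u => {v | R u v}) < #(univ : Finset β) :=
      calc #(C.biUnion fun u => {v | R u v})
          ≤ ∑ u ∈ C, #{v | R u v} := card_biUnion_le
        _ ≤ M * D := by simpa [hCM] using sum_le_sum fun u (_ : u ∈ C) => hD u
        _ < #(univ : Finset β) := by rw [card_univ]; nlinarith
    obtain ⟨v, -, hv⟩ := exists_mem_notMem_of_card_lt_card hnbhd
    have hvC : ∀ u ∈ C, ¬ R u v := fun u hu huv =>
      hv (mem_biUnion.2 ⟨u, hu, mem_filter.2 ⟨mem_univ v, huv⟩⟩)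
    have hv_notMem : v ∉ C := fun h => hvC v h (hrefl v)
    refine ⟨insert v C, by rw [card_insert_of_notMem hv_notMem, hCM], ?_⟩
    rw [coe_insert, Set.pairwise_insert]
    exact ⟨hC, fun u hu _ => ⟨fun hvu => hvC u hu (hsymm v u hvu), hvC u hu⟩⟩

theorem exists_code_not_hasCommonSubseq {α : Type*} [Fintype α] {ℓ m M : ℕ}
    (hℓm : ℓ ≤ m) (hM : M * (m.choose ℓ ^ 2 * Fintype.card α ^ (m - ℓ)) < Fintype.card α ^ m) :
    ∃ C : Finset (Fin m → α), #C = M ∧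
      ∀ u ∈ C, ∀ v ∈ C, u ≠ v → ¬ HasCommonSubseq ℓ u v := by
  classical
  obtain ⟨C, hCM, hC⟩ := exists_card_eq_pairwise_not_rel (HasCommonSubseq ℓ)
    (hasCommonSubseq_self hℓm) (fun _ _ => HasCommonSubseq.symm)
    card_filter_hasCommonSubseq_le (by simpa using hM)
  exact ⟨C, hCM, fun u hu v hv => hC hu hv⟩

open Real

theorem choose_le_exp_one_div_pow {ε : ℝ} (hε : 0 < ε) {ℓ m : ℕ} (hℓ : ε * m ≤ ℓ) :
    (m.choose ℓ : ℝ) ≤ (exp 1 / ε) ^ ℓ := by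
  have hm : (m : ℝ) ≤ ℓ / ε := by rw [le_div_iff₀ hε]; linarith
  calc (m.choose ℓ : ℝ)
      ≤ (m : ℝ) ^ ℓ / ℓ.factorial := Nat.choose_le_pow_div ℓ m
    _ ≤ (ℓ / ε) ^ ℓ / ℓ.factorial := by gcongr
    _ = (1 / ε) ^ ℓ * ((ℓ : ℝ) ^ ℓ / ℓ.factorial) := by rw [div_pow, div_pow]; ring
    _ ≤ (1 / ε) ^ ℓ * exp ℓ := by
        gcongr; exact pow_div_factorial_le_exp _ (Nat.cast_nonneg ℓ) ℓ
    _ = (exp 1 / ε) ^ ℓ := by rw [← exp_one_pow, div_pow, div_pow]; ring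

theorem two_pow_mul_choose_sq_lt {ε : ℝ} (hε : 0 < ε) {ℓ m : ℕ} (hℓ : ε * m ≤ ℓ)
    (hℓ0 : ℓ ≠ 0) :
    2 ^ ℓ * (m.choose ℓ : ℝ) ^ 2 < ((4 / ε) ^ 2) ^ ℓ := by
  have he : exp 1 < 2.7182818286 := exp_one_lt_d9
  have hbase : 2 * (exp 1 / ε) ^ 2 < (4 / ε) ^ 2 := by
    rw [div_pow, div_pow, ← mul_div_assoc]
    gcongr
    nlinarith [exp_pos 1]
  calc 2 ^ ℓ * (m.choose ℓ : ℝ) ^ 2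
      ≤ 2 ^ ℓ * ((exp 1 / ε) ^ ℓ) ^ 2 := by gcongr; exact choose_le_exp_one_div_pow hε hℓ
    _ = (2 * (exp 1 / ε) ^ 2) ^ ℓ := by ring
    _ < ((4 / ε) ^ 2) ^ ℓ := by gcongr

theorem rpow_div_logb_le_two_rpow {ε : ℝ} (hε : 0 < ε) (hε4 : ε ≤ 1 / 4) {x : ℝ}
    (hx : 0 ≤ x) :
    ((4 / ε) ^ 2) ^ (1 / 4 * x / logb 2 (1 / ε)) ≤ (2 : ℝ) ^ x := by
  set L := logb 2 (1 / ε)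
  have hL : 0 < L := logb_pos one_lt_two (by rw [lt_div_iff₀ hε]; linarith)
  have hk : (4 / ε) ^ 2 ≤ (2 : ℝ) ^ (L * 4) := by
    rw [rpow_mul zero_le_two, rpow_logb two_pos (by norm_num) (by positivity),
      show (4 : ℝ) = (4 : ℕ) by norm_num, rpow_natCast, div_pow, div_pow,
      div_le_div_iff₀ (by positivity) (by positivity)]
    have h16 : 16 * ε ^ 2 ≤ 1 := by nlinarith
    push_cast
    nlinarith [mul_le_mul_of_nonneg_left h16 (sq_nonneg ε)]
  calc ((4 / ε) ^ 2) ^ (1 / 4 * x / L)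
      ≤ ((2 : ℝ) ^ (L * 4)) ^ (1 / 4 * x / L) := by gcongr
    _ = (2 : ℝ) ^ x := by rw [← rpow_mul zero_le_two]; congr 1; field_simp

theorem mul_choose_sq_mul_pow_lt {ε : ℝ} (hε : 0 < ε) {k ℓ m M : ℕ}
    (hk : (k : ℝ) = (4 / ε) ^ 2) (hℓ : ε * m ≤ ℓ) (hℓ0 : ℓ ≠ 0) (hℓm : ℓ ≤ m) (hM : M ≤ 2 ^ ℓ) :
    M * (m.choose ℓ ^ 2 * k ^ (m - ℓ)) < k ^ m := by
  have hk0 : (0 : ℝ) < k := by rw [hk]; positivity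
  suffices (M : ℝ) * ((m.choose ℓ : ℝ) ^ 2 * (k : ℝ) ^ (m - ℓ)) < (k : ℝ) ^ m by
    exact_mod_cast this
  calc (M : ℝ) * ((m.choose ℓ : ℝ) ^ 2 * (k : ℝ) ^ (m - ℓ))
      ≤ 2 ^ ℓ * (m.choose ℓ : ℝ) ^ 2 * (k : ℝ) ^ (m - ℓ) := by
        rw [← mul_assoc]; gcongr; exact_mod_cast hM
    _ < (k : ℝ) ^ ℓ * (k : ℝ) ^ (m - ℓ) := by
        gcongr; rw [hk]; exact two_pow_mul_choose_sq_lt hε hℓ hℓ0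
    _ = k ^ m := by rw [← pow_add, Nat.add_sub_cancel' hℓm]

/-- There exist constants `c > 0` and `ε₀ > 0` such that for every `ε ∈ (0, ε₀)` with
`k = (4/ε)²` an integer, and every sufficiently large `m`, there exists a code
`C ⊆ [k]^m` with `|C| ≥ k^{cεm/log₂(1/ε)}` (i.e. of rate `Ω(ε/log(1/ε))`) such that every
two distinct codewords have longest common subsequence of length less than `εm` (no
string of length `⌈εm⌉` is a common subsequence of two distinct codewords); that is, `C`
can be corrected from a `1 - ε = 1 - 4/√k` fraction of worst-case deletions. -/
theorem random_codes_high_deletion :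
    ∃ c : ℝ, 0 < c ∧ ∃ ε₀ : ℝ, 0 < ε₀ ∧
      ∀ ε : ℝ, 0 < ε → ε < ε₀ → ∀ k : ℕ, (k : ℝ) = (4 / ε) ^ 2 →
        ∃ m₀ : ℕ, ∀ m : ℕ, m₀ ≤ m →
          ∃ C : Finset (Fin m → Fin k),
            (k : ℝ) ^ (c * ε * m / Real.logb 2 (1 / ε)) ≤ C.card ∧
            ∀ u ∈ C, ∀ v ∈ C, u ≠ v →
              ¬∃ s : Fin (⌈ε * m⌉₊) → Fin k, IsSubseq s u ∧ IsSubseq s v := by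
  refine ⟨1 / 4, by norm_num, 1 / 4, by norm_num, fun ε hε hε4 k hk => ⟨1, fun m hm => ?_⟩⟩
  have hm : (1 : ℝ) ≤ m := mod_cast hm
  set ℓ := ⌈ε * m⌉₊
  have hℓ : ε * m ≤ ℓ := Nat.le_ceil _
  have hℓ0 : ℓ ≠ 0 := (Nat.ceil_pos.2 (by positivity)).ne'
  have hℓm : ℓ ≤ m := Nat.ceil_le.2 (by nlinarith)
  set M := ⌈(k : ℝ) ^ (1 / 4 * ε * m / logb 2 (1 / ε))⌉₊
  have hM : M ≤ 2 ^ ℓ := by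
    refine Nat.ceil_le.2 ?_
    calc (k : ℝ) ^ (1 / 4 * ε * m / logb 2 (1 / ε))
        ≤ 2 ^ (ε * m) := by
          rw [hk, mul_assoc]; exact rpow_div_logb_le_two_rpow hε hε4.le (by positivity)
      _ ≤ 2 ^ (ℓ : ℝ) := rpow_le_rpow_of_exponent_le one_le_two hℓ
      _ = ((2 ^ ℓ : ℕ) : ℝ) := by norm_cast
  obtain ⟨C, hCM, hC⟩ := exists_code_not_hasCommonSubseq (α := Fin k) hℓm
    (by simpa using mul_choose_sq_mul_pow_lt hε hk hℓ hℓ0 hℓm hM)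
  exact ⟨C, hCM ▸ Nat.le_ceil _, hC⟩
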